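/- In the second-order setting, if λ̇_* ≡ λ̇_j^* = λ̇_{j'}^* for distinct indices j ≠ j' in the multiple-eigenvalue cluster, then the off-diagonal identity (Ä_t − λ B̈_t − 2λ̇_* Ḃ_t)(φ_j, φ_{j'}) = 2 C_t(z_*^j, z_*^{j'}) holds. -/

import Mathlib

/-!
Let `(μₙ, wₙ)` be the eigenpairs of the `j`-branch at `t + hₙ`, with `wₙ → φ_j`. Testing
`A_{t+h}(w, ψ) = μ B_{t+h}(w, ψ)` against a `λ`-eigenvector `ψ` at `t`, expanding to second
order in `h` and cancelling the first-order terms with the corrector equation of `z_ψ` shows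
that `cₙ B_t(wₙ, ψ)`, where `cₙ = (λ̇ hₙ - (μₙ - λ)) / hₙ²`, converges to
`C_t(z_j, z_ψ) + λ̇ Ḃ(φ_j, ψ) - (Ä - λ B̈)(φ_j, ψ) / 2`. For `ψ = φ_j` the factor
`B_t(wₙ, φ_j)` tends to `1`, so `cₙ` converges; for `ψ = φ_{j'}` it tends to
`B_t(φ_j, φ_{j'}) = 0`, so that limit vanishes, which is the identity.
-/

open Filter Topology

section Expansion

variable {W W' α : Type*} [NormedAddCommGroup W] [NormedSpace ℝ W]
  [NormedAddCommGroup W'] [NormedSpace ℝ W']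

def HasSecondOrderExpansionAt (F : ℝ → W →ₗ[ℝ] W →ₗ[ℝ] ℝ) (F' F'' : W →ₗ[ℝ] W →ₗ[ℝ] ℝ)
    (t : ℝ) : Prop :=
  ∀ ε > (0:ℝ), ∃ η > (0:ℝ), ∀ h : ℝ, h ≠ 0 → |h| < η →
    ∀ u v : W, ‖u‖ ≤ 1 → ‖v‖ ≤ 1 →
      |F (t + h) u v - F t u v - h * F' u v - h ^ 2 / 2 * F'' u v| ≤ ε * h ^ 2

theorem LinearMap.abs_apply_le_of_unit_ball (G : W →ₗ[ℝ] W' →ₗ[ℝ] ℝ) {c : ℝ}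
    (hG : ∀ u v, ‖u‖ ≤ 1 → ‖v‖ ≤ 1 → |G u v| ≤ c) (u : W) (v : W') :
    |G u v| ≤ c * ‖u‖ * ‖v‖ := by
  rcases eq_or_ne u 0 with rfl | hu
  · simp
  rcases eq_or_ne v 0 with rfl | hv
  · simp
  have hu' : 0 < ‖u‖ := norm_pos_iff.mpr hu
  have hv' : 0 < ‖v‖ := norm_pos_iff.mpr hv
  have hscaled := hG (‖u‖⁻¹ • u) (‖v‖⁻¹ • v) (by simp [norm_smul, hu'.ne'])
    (by simp [norm_smul, hv'.ne'])
  simp only [map_smul, LinearMap.smul_apply, smul_eq_mul, abs_mul, abs_inv, abs_norm] at hscaled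
  rw [inv_mul_le_iff₀ hv', inv_mul_le_iff₀ hu'] at hscaled
  linarith

theorem LinearMap.continuous_uncurry_of_bound (G : W →ₗ[ℝ] W' →ₗ[ℝ] ℝ) (C : ℝ)
    (hG : ∀ u v, |G u v| ≤ C * ‖u‖ * ‖v‖) : Continuous fun p : W × W' => G p.1 p.2 :=
  (G.mkContinuous₂ C hG).continuous₂

theorem eq_zero_of_abs_mul_add_sq_mul_le {a b C η : ℝ} (hη : 0 < η)
    (h : ∀ x, 0 < x → x < η → |x * a + x ^ 2 * b| ≤ C * x ^ 2) : a = 0 := by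
  have hbound : ∀ x, 0 < x → x < η → |a| ≤ x * (C + |b|) := by
    intro x hx hxη
    have hxa : x * |a| ≤ C * x ^ 2 + x ^ 2 * |b| := by
      calc x * |a| = |(x * a + x ^ 2 * b) - x ^ 2 * b| := by
            rw [add_sub_cancel_right, abs_mul, abs_of_pos hx]
        _ ≤ |x * a + x ^ 2 * b| + |x ^ 2 * b| := abs_sub _ _
        _ ≤ C * x ^ 2 + x ^ 2 * |b| := by
            rw [abs_mul, abs_of_nonneg (sq_nonneg x)]
            linarith [h x hx hxη]
    nlinarith
  have hlim : Tendsto (fun x => x * (C + |b|)) (𝓝[>] 0) (𝓝 0) :=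
    ((continuous_mul_const (C + |b|)).tendsto' 0 0 (zero_mul _)).mono_left nhdsWithin_le_nhds
  exact abs_nonpos_iff.mp <|
    ge_of_tendsto hlim (mem_of_superset (Ioo_mem_nhdsGT hη) fun x hx => hbound x hx.1 hx.2)

namespace HasSecondOrderExpansionAt

variable {F : ℝ → W →ₗ[ℝ] W →ₗ[ℝ] ℝ} {F' F'' : W →ₗ[ℝ] W →ₗ[ℝ] ℝ} {t : ℝ}

theorem abs_remainder_le (hF : HasSecondOrderExpansionAt F F' F'' t) :
    ∀ ε > (0:ℝ), ∃ η > (0:ℝ), ∀ h : ℝ, h ≠ 0 → |h| < η → ∀ u v : W,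
      |F (t + h) u v - F t u v - h * F' u v - h ^ 2 / 2 * F'' u v| ≤ ε * h ^ 2 * ‖u‖ * ‖v‖ := by
  intro ε hε
  obtain ⟨η, hη, hbound⟩ := hF ε hε
  refine ⟨η, hη, fun h h0 hη' u v => ?_⟩
  have := (F (t + h) - F t - h • F' - (h ^ 2 / 2) • F'').abs_apply_le_of_unit_ball
    (fun u v hu hv => by simpa using hbound h h0 hη' u v hu hv) u v
  simpa using this

theorem deriv_symm (hF : HasSecondOrderExpansionAt F F' F'' t)
    (hsymm : ∀ s u v, F s u v = F s v u) (u v : W) : F' u v = F' v u := by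
  obtain ⟨η, hη, hbound⟩ := hF.abs_remainder_le 1 one_pos
  suffices F' u v - F' v u = 0 by linarith
  refine eq_zero_of_abs_mul_add_sq_mul_le (b := (F'' u v - F'' v u) / 2)
    (C := 2 * ‖u‖ * ‖v‖) hη fun x hx hxη => ?_
  have hxη' : |x| < η := by rwa [abs_of_pos hx]
  have huv := hbound x hx.ne' hxη' u v
  have hvu := hbound x hx.ne' hxη' v u
  rw [hsymm (t + x) v u, hsymm t v u] at hvu
  calc |x * (F' u v - F' v u) + x ^ 2 * ((F'' u v - F'' v u) / 2)|
      = |(F (t + x) u v - F t u v - x * F' v u - x ^ 2 / 2 * F'' v u)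
          - (F (t + x) u v - F t u v - x * F' u v - x ^ 2 / 2 * F'' u v)| := by
        congr 1; ring
    _ ≤ 1 * x ^ 2 * ‖v‖ * ‖u‖ + 1 * x ^ 2 * ‖u‖ * ‖v‖ := (abs_sub _ _).trans (add_le_add hvu huv)
    _ = 2 * ‖u‖ * ‖v‖ * x ^ 2 := by ring

variable {l : Filter α} {h : α → ℝ} {u v : α → W} {u₀ v₀ : W}

theorem tendsto_remainder_div_sq (hF : HasSecondOrderExpansionAt F F' F'' t)
    (hh0 : ∀ n, h n ≠ 0) (hh : Tendsto h l (𝓝 0))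
    (hu : Tendsto u l (𝓝 u₀)) (hv : Tendsto v l (𝓝 v₀)) :
    Tendsto (fun n => (F (t + h n) (u n) (v n) - F t (u n) (v n) - h n * F' (u n) (v n)
      - h n ^ 2 / 2 * F'' (u n) (v n)) / h n ^ 2) l (𝓝 0) := by
  have hnorms : Tendsto (fun n => ‖u n‖ * ‖v n‖) l (𝓝 (‖u₀‖ * ‖v₀‖)) :=
    hu.norm.mul hv.norm
  rw [← Asymptotics.isLittleO_one_iff ℝ]
  refine Asymptotics.IsLittleO.trans_isBigO ?_ (hnorms.isBigO_one ℝ)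
  refine Asymptotics.IsLittleO.of_bound fun ε hε => ?_
  obtain ⟨η, hη, hbound⟩ := hF.abs_remainder_le ε hε
  have hsmall : ∀ᶠ n in l, |h n| < η := by
    simpa using hh.abs.eventually_lt_const (by simpa using hη)
  filter_upwards [hsmall] with n hn
  have hsq : 0 < h n ^ 2 := by positivity [hh0 n]
  rw [Real.norm_eq_abs, Real.norm_eq_abs, abs_div, abs_of_pos hsq,
    abs_of_nonneg (by positivity : 0 ≤ ‖u n‖ * ‖v n‖), div_le_iff₀ hsq]
  linarith [hbound (h n) (hh0 n) hn (u n) (v n)]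

theorem tendsto_secondDiffQuot (hF : HasSecondOrderExpansionAt F F' F'' t)
    (hF'' : Continuous fun p : W × W => F'' p.1 p.2)
    (hh0 : ∀ n, h n ≠ 0) (hh : Tendsto h l (𝓝 0))
    (hu : Tendsto u l (𝓝 u₀)) (hv : Tendsto v l (𝓝 v₀)) :
    Tendsto (fun n => (F (t + h n) (u n) (v n) - F t (u n) (v n) - h n * F' (u n) (v n))
      / h n ^ 2) l (𝓝 (F'' u₀ v₀ / 2)) := by
  have hlim := (hF.tendsto_remainder_div_sq hh0 hh hu hv).add
    (((hF''.tendsto (u₀, v₀)).comp (hu.prodMk_nhds hv)).div_const 2)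
  rw [zero_add] at hlim
  refine hlim.congr fun n => ?_
  field_simp [hh0 n]
  simp only [Function.comp_apply]
  ring

theorem tendsto_diffQuot (hF : HasSecondOrderExpansionAt F F' F'' t)
    (hF' : Continuous fun p : W × W => F' p.1 p.2)
    (hF'' : Continuous fun p : W × W => F'' p.1 p.2)
    (hh0 : ∀ n, h n ≠ 0) (hh : Tendsto h l (𝓝 0))
    (hu : Tendsto u l (𝓝 u₀)) (hv : Tendsto v l (𝓝 v₀)) :
    Tendsto (fun n => (F (t + h n) (u n) (v n) - F t (u n) (v n)) / h n) l
      (𝓝 (F' u₀ v₀)) := by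
  have hlim := (hh.mul (hF.tendsto_secondDiffQuot hF'' hh0 hh hu hv)).add
    ((hF'.tendsto (u₀, v₀)).comp (hu.prodMk_nhds hv))
  rw [zero_mul, zero_add] at hlim
  refine hlim.congr fun n => ?_
  field_simp [hh0 n]
  simp only [Function.comp_apply]
  ring

end HasSecondOrderExpansionAt

theorem HasSecondOrderExpansionAt.compl₁₂ {F : ℝ → W' →ₗ[ℝ] W' →ₗ[ℝ] ℝ}
    {F' F'' : W' →ₗ[ℝ] W' →ₗ[ℝ] ℝ} {t : ℝ}
    (hF : HasSecondOrderExpansionAt F F' F'' t) (g : W →L[ℝ] W') :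
    HasSecondOrderExpansionAt (fun s => (F s).compl₁₂ (g : W →ₗ[ℝ] W') (g : W →ₗ[ℝ] W'))
      (F'.compl₁₂ (g : W →ₗ[ℝ] W') g) (F''.compl₁₂ (g : W →ₗ[ℝ] W') g) t := by
  intro ε hε
  obtain ⟨η, hη, hbound⟩ := hF.abs_remainder_le (ε / (‖g‖ ^ 2 + 1)) (by positivity)
  refine ⟨η, hη, fun h h0 hη' u v hu hv => ?_⟩
  have hgu : ‖g u‖ ≤ ‖g‖ := (g.le_opNorm u).trans (mul_le_of_le_one_right (norm_nonneg _) hu)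
  have hgv : ‖g v‖ ≤ ‖g‖ := (g.le_opNorm v).trans (mul_le_of_le_one_right (norm_nonneg _) hv)
  calc _ ≤ ε / (‖g‖ ^ 2 + 1) * h ^ 2 * ‖g u‖ * ‖g v‖ := hbound h h0 hη' (g u) (g v)
    _ ≤ ε / (‖g‖ ^ 2 + 1) * h ^ 2 * ‖g‖ * ‖g‖ := by gcongr
    _ ≤ ε * h ^ 2 := by
        rw [div_mul_eq_mul_div, div_mul_eq_mul_div, div_mul_eq_mul_div, div_le_iff₀ (by positivity)]
        nlinarith [sq_nonneg h, mul_pos hε (sq_pos_of_ne_zero h0)]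

end Expansion

theorem tendsto_of_tendsto_sub_div {α : Type*} {l : Filter α} {h μ : α → ℝ} {μ₀ μ' : ℝ}
    (hh0 : ∀ n, h n ≠ 0) (hh : Tendsto h l (𝓝 0))
    (hμ : Tendsto (fun n => (μ n - μ₀) / h n) l (𝓝 μ')) : Tendsto μ l (𝓝 μ₀) := by
  have hlim := (hh.mul hμ).add_const μ₀
  rw [zero_mul, zero_add] at hlim
  exact hlim.congr fun n => by field_simp [hh0 n]; ring

theorem Filter.Tendsto.mul_tendsto_zero_of_mul_tendsto {α : Type*} {l : Filter α}
    {c b d : α → ℝ} {L : ℝ} (hcb : Tendsto (fun n => c n * b n) l (𝓝 L))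
    (hb : Tendsto b l (𝓝 1)) (hd : Tendsto d l (𝓝 0)) :
    Tendsto (fun n => c n * d n) l (𝓝 0) := by
  have hlim := (hcb.div hb one_ne_zero).mul hd
  rw [mul_zero] at hlim
  refine hlim.congr' ?_
  filter_upwards [hb.eventually_ne one_ne_zero] with n hn
  rw [Pi.div_apply, mul_div_cancel_right₀ _ hn]

section EigenBranch

variable {W α : Type*} [NormedAddCommGroup W] [NormedSpace ℝ W]
  {a b : ℝ → W →ₗ[ℝ] W →ₗ[ℝ] ℝ} {a' a'' b' b'' : W →ₗ[ℝ] W →ₗ[ℝ] ℝ} {t : ℝ}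
  {l : Filter α} {h μ : α → ℝ} {w : α → W} {lam lamdot : ℝ} {φ : W}

theorem tendsto_eigenResidual_div
    (ha : HasSecondOrderExpansionAt a a' a'' t) (hb : HasSecondOrderExpansionAt b b' b'' t)
    (ha' : Continuous fun p : W × W => a' p.1 p.2) (ha'' : Continuous fun p : W × W => a'' p.1 p.2)
    (hbt : Continuous fun p : W × W => b t p.1 p.2)
    (hb' : Continuous fun p : W × W => b' p.1 p.2) (hb'' : Continuous fun p : W × W => b'' p.1 p.2)
    (hh0 : ∀ n, h n ≠ 0) (hh : Tendsto h l (𝓝 0))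
    (heig : ∀ n v, a (t + h n) (w n) v = μ n * b (t + h n) (w n) v)
    (hw : Tendsto w l (𝓝 φ)) (hμ : Tendsto (fun n => (μ n - lam) / h n) l (𝓝 lamdot))
    (v : W) :
    Tendsto (fun n => (a t (w n) v - lam * b t (w n) v) / h n) l
      (𝓝 (lamdot * b t φ v + lam * b' φ v - a' φ v)) := by
  have hv : Tendsto (fun _ : α => v) l (𝓝 v) := tendsto_const_nhds
  have hQa := ha.tendsto_diffQuot ha' ha'' hh0 hh hw hv
  have hQb := hb.tendsto_diffQuot hb' hb'' hh0 hh hw hv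
  have hbtw : Tendsto (fun n => b t (w n) v) l (𝓝 (b t φ v)) :=
    (hbt.tendsto (φ, v)).comp (hw.prodMk_nhds hv)
  have hlim := ((hμ.mul hbtw).add
    ((tendsto_of_tendsto_sub_div hh0 hh hμ).mul hQb)).sub hQa
  refine hlim.congr fun n => ?_
  have hn := heig n v
  field_simp [hh0 n]
  linear_combination -hn

theorem tendsto_eigenvalueRemainder_mul
    (ha : HasSecondOrderExpansionAt a a' a'' t) (hb : HasSecondOrderExpansionAt b b' b'' t)
    (ha_symm : ∀ s u v, a s u v = a s v u) (hb_symm : ∀ s u v, b s u v = b s v u)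
    (ha' : Continuous fun p : W × W => a' p.1 p.2) (ha'' : Continuous fun p : W × W => a'' p.1 p.2)
    (hbt : Continuous fun p : W × W => b t p.1 p.2)
    (hb' : Continuous fun p : W × W => b' p.1 p.2) (hb'' : Continuous fun p : W × W => b'' p.1 p.2)
    (hh0 : ∀ n, h n ≠ 0) (hh : Tendsto h l (𝓝 0))
    (heig : ∀ n v, a (t + h n) (w n) v = μ n * b (t + h n) (w n) v)
    (hw : Tendsto w l (𝓝 φ)) (hμ : Tendsto (fun n => (μ n - lam) / h n) l (𝓝 lamdot))
    {z₀ : W} (hz₀ : ∀ v, a t z₀ v - lam * b t z₀ v = -(a' φ v - lamdot * b t φ v - lam * b' φ v))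
    {ψ z : W} (hψ : ∀ v, a t ψ v = lam * b t ψ v)
    (hz : ∀ v, a t z v - lam * b t z v = -(a' ψ v - lamdot * b t ψ v - lam * b' ψ v)) :
    Tendsto (fun n => (lamdot * h n - (μ n - lam)) / h n ^ 2 * b t (w n) ψ) l
      (𝓝 (a t z₀ z - lam * b t z₀ z + lamdot * b' φ ψ - (a'' φ ψ - lam * b'' φ ψ) / 2)) := by
  have hψc : Tendsto (fun _ : α => ψ) l (𝓝 ψ) := tendsto_const_nhds
  have hSa := ha.tendsto_secondDiffQuot ha'' hh0 hh hw hψc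
  have hSb := hb.tendsto_secondDiffQuot hb'' hh0 hh hw hψc
  have hR := tendsto_eigenResidual_div ha hb ha' ha'' hbt hb' hb'' hh0 hh heig hw hμ z
  have hb'w : Tendsto (fun n => b' (w n) ψ) l (𝓝 (b' φ ψ)) :=
    (hb'.tendsto (φ, ψ)).comp (hw.prodMk_nhds hψc)
  have hlim := ((((tendsto_of_tendsto_sub_div hh0 hh hμ).mul hSb).sub hSa).add hR).add
    (hμ.mul hb'w)
  convert hlim using 2 with n
  · have ha'_symm := ha.deriv_symm ha_symm
    have hb'_symm := hb.deriv_symm hb_symm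
    have hn := heig n ψ
    have hψw := hψ (w n)
    have hzw := hz (w n)
    rw [ha_symm t ψ, hb_symm t ψ] at hψw
    rw [ha_symm t z, hb_symm t z, ha'_symm ψ, hb_symm t ψ, hb'_symm ψ] at hzw
    field_simp [hh0 n]
    linear_combination hn - hψw - h n * hzw
  · linear_combination hz₀ z

end EigenBranch

theorem hadamard_stmt15_general
    {V : Type*} [NormedAddCommGroup V] [InnerProductSpace ℝ V] [CompleteSpace V]
    {X : Type*} [NormedAddCommGroup X] [InnerProductSpace ℝ X] [CompleteSpace X]
    (ι : V →L[ℝ] X)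
    (A : ℝ → V →ₗ[ℝ] V →ₗ[ℝ] ℝ) (B : ℝ → X →ₗ[ℝ] X →ₗ[ℝ] ℝ)
    (hAsymm : ∀ t', ∀ u v : V, A t' u v = A t' v u)
    (hBsymm : ∀ t', ∀ u v : X, B t' u v = B t' v u)
    (CB : ℝ) (hBbdd : ∀ t', ∀ u v : X, |B t' u v| ≤ CB * ‖u‖ * ‖v‖)
    (t : ℝ)
    (A' : V →ₗ[ℝ] V →ₗ[ℝ] ℝ) (B' : X →ₗ[ℝ] X →ₗ[ℝ] ℝ)
    (CA' : ℝ) (hA'bdd : ∀ u v : V, |A' u v| ≤ CA' * ‖u‖ * ‖v‖)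
    (CB' : ℝ) (hB'bdd : ∀ u v : X, |B' u v| ≤ CB' * ‖u‖ * ‖v‖)
    (A'' : V →ₗ[ℝ] V →ₗ[ℝ] ℝ) (B'' : X →ₗ[ℝ] X →ₗ[ℝ] ℝ)
    (CA'' : ℝ) (hA''bdd : ∀ u v : V, |A'' u v| ≤ CA'' * ‖u‖ * ‖v‖)
    (CB'' : ℝ) (hB''bdd : ∀ u v : X, |B'' u v| ≤ CB'' * ‖u‖ * ‖v‖)
    (hAder2 : ∀ ε > (0:ℝ), ∃ η > (0:ℝ), ∀ h : ℝ, h ≠ 0 → |h| < η →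
      ∀ u v : V, ‖u‖ ≤ 1 → ‖v‖ ≤ 1 →
        |A (t + h) u v - A t u v - h * A' u v - h ^ 2 / 2 * A'' u v| ≤ ε * h ^ 2)
    (hBder2 : ∀ ε > (0:ℝ), ∃ η > (0:ℝ), ∀ h : ℝ, h ≠ 0 → |h| < η →
      ∀ u v : X, ‖u‖ ≤ 1 → ‖v‖ ≤ 1 →
        |B (t + h) u v - B t u v - h * B' u v - h ^ 2 / 2 * B'' u v| ≤ ε * h ^ 2)
    (lam : ℕ → ℝ → ℝ) (u : ℕ → ℝ → V) (j j' : ℕ)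
    -- `B_{t'}`-orthonormal eigenfunctions for `λ_j(t')`, `λ_{j'}(t')`
    (heig : ∀ t', ∀ i : ℕ, (i = j ∨ i = j') →
      ∀ v : V, A t' (u i t') v = lam i t' * B t' (ι (u i t')) (ι v))
    (lambda : ℝ) (hlambda : lambda = lam j t)
    (Y : Submodule ℝ V)
    (hYeig : ∀ w : V, w ∈ Y ↔ ∀ v : V, A t w v = lambda * B t (ι w) (ι v))
    (hseq : ℕ → ℝ) (hseq0 : ∀ ℓ, hseq ℓ ≠ 0)
    (hseqlim : Filter.Tendsto hseq Filter.atTop (nhds 0))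
    (φj φj' : V) (hφjY : φj ∈ Y) (hφj'Y : φj' ∈ Y)
    (hφnorm : B t (ι φj) (ι φj) = 1)
    (hφorth : B t (ι φj) (ι φj') = 0)
    (hφlim : Filter.Tendsto (fun ℓ => u j (t + hseq ℓ)) Filter.atTop (nhds φj))
    -- equal first-derivative limits `λ̇_* = λ̇_j^* = λ̇_{j'}^*`
    (lamdot : ℝ)
    (hlamdot : Filter.Tendsto (fun ℓ => (lam j (t + hseq ℓ) - lam j t) / hseq ℓ)
      Filter.atTop (nhds lamdot))
    -- the correctors `z_*^j`, `z_*^{j'} ∈ PV`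
    (zj zj' : V)
    (hzj : ∀ v : V,
      A t zj v - lambda * B t (ι zj) (ι v) =
        -(A' φj v - lamdot * B t (ι φj) (ι v) - lambda * B' (ι φj) (ι v)))
    (hzj' : ∀ v : V,
      A t zj' v - lambda * B t (ι zj') (ι v) =
        -(A' φj' v - lamdot * B t (ι φj') (ι v) - lambda * B' (ι φj') (ι v))) :
    A'' φj φj' - lambda * B'' (ι φj) (ι φj') - 2 * lamdot * B' (ι φj) (ι φj') =
      2 * (A t zj zj' - lambda * B t (ι zj) (ι zj')) := by
  have hcont_pullback : ∀ (F : X →ₗ[ℝ] X →ₗ[ℝ] ℝ) (C : ℝ), (∀ u v, |F u v| ≤ C * ‖u‖ * ‖v‖) →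
      Continuous fun p : V × V => F (ι p.1) (ι p.2) := fun F C hF =>
    (F.continuous_uncurry_of_bound C hF).comp (ι.continuous.prodMap ι.continuous)
  have hμ : Tendsto (fun n => (lam j (t + hseq n) - lambda) / hseq n) atTop (𝓝 lamdot) :=
    hlambda ▸ hlamdot
  have hcoeff := fun {ψ z : V} => tendsto_eigenvalueRemainder_mul hAder2
    (HasSecondOrderExpansionAt.compl₁₂ hBder2 ι)
    hAsymm (fun s u v => hBsymm s (ι u) (ι v))
    (A'.continuous_uncurry_of_bound CA' hA'bdd) (A''.continuous_uncurry_of_bound CA'' hA''bdd)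
    (hcont_pullback (B t) CB (hBbdd t)) (hcont_pullback B' CB' hB'bdd) (hcont_pullback B'' CB'' hB''bdd)
    hseq0 hseqlim (fun n v => heig _ j (Or.inl rfl) v) hφlim hμ hzj (ψ := ψ) (z := z)
  have hdiag := hcoeff ((hYeig φj).mp hφjY) hzj
  have hoff := hcoeff ((hYeig φj').mp hφj'Y) hzj'
  have hBt : ∀ ψ : V, Tendsto (fun n => B t (ι (u j (t + hseq n))) (ι ψ)) atTop
      (𝓝 (B t (ι φj) (ι ψ))) := fun ψ =>
    ((hcont_pullback (B t) CB (hBbdd t)).tendsto (φj, ψ)).comp (hφlim.prodMk_nhds tendsto_const_nhds)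
  have hoff0 := hdiag.mul_tendsto_zero_of_mul_tendsto (hφnorm ▸ hBt φj) (hφorth ▸ hBt φj')
  have hlimit := tendsto_nhds_unique hoff hoff0
  simp only [LinearMap.compl₁₂_apply, ContinuousLinearMap.coe_coe] at hlimit
  linarith

/-- off-diagonal identity in the second-order setting: if
`λ̇_* = λ̇_j^* = λ̇_{j'}^*` for distinct `j ≠ j'` in the cluster, then
`(Ä_t − λB̈_t − 2λ̇_* Ḃ_t)(φ_j, φ_{j'}) = 2 C_t(z_*^j, z_*^{j'})`. -/
theorem hadamard_stmt15
    {V : Type*} [NormedAddCommGroup V] [InnerProductSpace ℝ V] [CompleteSpace V]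
    {X : Type*} [NormedAddCommGroup X] [InnerProductSpace ℝ X] [CompleteSpace X]
    (ι : V →L[ℝ] X) (hι : Function.Injective ι) (hcompact : IsCompactOperator ι)
    (A : ℝ → V →ₗ[ℝ] V →ₗ[ℝ] ℝ) (B : ℝ → X →ₗ[ℝ] X →ₗ[ℝ] ℝ)
    (hAsymm : ∀ t', ∀ u v : V, A t' u v = A t' v u)
    (hBsymm : ∀ t', ∀ u v : X, B t' u v = B t' v u)
    (CA : ℝ) (hAbdd : ∀ t', ∀ u v : V, |A t' u v| ≤ CA * ‖u‖ * ‖v‖)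
    (CB : ℝ) (hBbdd : ∀ t', ∀ u v : X, |B t' u v| ≤ CB * ‖u‖ * ‖v‖)
    (δ : ℝ) (hδ : 0 < δ)
    (hAcoer : ∀ t', ∀ v : V, δ * ‖v‖ ^ 2 ≤ A t' v v)
    (hBcoer : ∀ t', ∀ v : X, δ * ‖v‖ ^ 2 ≤ B t' v v)
    (t : ℝ)
    (A' : V →ₗ[ℝ] V →ₗ[ℝ] ℝ) (B' : X →ₗ[ℝ] X →ₗ[ℝ] ℝ)
    (CA' : ℝ) (hA'bdd : ∀ u v : V, |A' u v| ≤ CA' * ‖u‖ * ‖v‖)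
    (CB' : ℝ) (hB'bdd : ∀ u v : X, |B' u v| ≤ CB' * ‖u‖ * ‖v‖)
    (A'' : V →ₗ[ℝ] V →ₗ[ℝ] ℝ) (B'' : X →ₗ[ℝ] X →ₗ[ℝ] ℝ)
    (CA'' : ℝ) (hA''bdd : ∀ u v : V, |A'' u v| ≤ CA'' * ‖u‖ * ‖v‖)
    (CB'' : ℝ) (hB''bdd : ∀ u v : X, |B'' u v| ≤ CB'' * ‖u‖ * ‖v‖)
    (hAder2 : ∀ ε > (0:ℝ), ∃ η > (0:ℝ), ∀ h : ℝ, h ≠ 0 → |h| < η →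
      ∀ u v : V, ‖u‖ ≤ 1 → ‖v‖ ≤ 1 →
        |A (t + h) u v - A t u v - h * A' u v - h ^ 2 / 2 * A'' u v| ≤ ε * h ^ 2)
    (hBder2 : ∀ ε > (0:ℝ), ∃ η > (0:ℝ), ∀ h : ℝ, h ≠ 0 → |h| < η →
      ∀ u v : X, ‖u‖ ≤ 1 → ‖v‖ ≤ 1 →
        |B (t + h) u v - B t u v - h * B' u v - h ^ 2 / 2 * B'' u v| ≤ ε * h ^ 2)
    (lam : ℕ → ℝ → ℝ) (u : ℕ → ℝ → V) (j j' : ℕ) (hjj' : j ≠ j')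
    -- `B_{t'}`-orthonormal eigenfunctions for `λ_j(t')`, `λ_{j'}(t')`
    (horth : ∀ t', ∀ i i' : ℕ, (i = j ∨ i = j') → (i' = j ∨ i' = j') →
      B t' (ι (u i t')) (ι (u i' t')) = if i = i' then 1 else 0)
    (heig : ∀ t', ∀ i : ℕ, (i = j ∨ i = j') →
      ∀ v : V, A t' (u i t') v = lam i t' * B t' (ι (u i t')) (ι v))
    (lambda : ℝ) (hlambda : lambda = lam j t) (hlambda' : lambda = lam j' t)
    (Y : Submodule ℝ V)
    (hYeig : ∀ w : V, w ∈ Y ↔ ∀ v : V, A t w v = lambda * B t (ι w) (ι v))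
    (P : V →L[ℝ] V)
    (hPY : ∀ v : V, v - P v ∈ Y)
    (hPorth : ∀ v : V, ∀ y ∈ Y, B t (ι (P v)) (ι y) = 0)
    (hseq : ℕ → ℝ) (hseq0 : ∀ ℓ, hseq ℓ ≠ 0)
    (hseqlim : Filter.Tendsto hseq Filter.atTop (nhds 0))
    (φj φj' : V) (hφjY : φj ∈ Y) (hφj'Y : φj' ∈ Y)
    (hφnorm : B t (ι φj) (ι φj) = 1) (hφ'norm : B t (ι φj') (ι φj') = 1)
    (hφorth : B t (ι φj) (ι φj') = 0)
    (hφlim : Filter.Tendsto (fun ℓ => u j (t + hseq ℓ)) Filter.atTop (nhds φj))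
    (hφ'lim : Filter.Tendsto (fun ℓ => u j' (t + hseq ℓ)) Filter.atTop (nhds φj'))
    -- equal first-derivative limits `λ̇_* = λ̇_j^* = λ̇_{j'}^*`
    (lamdot : ℝ)
    (hlamdot : Filter.Tendsto (fun ℓ => (lam j (t + hseq ℓ) - lam j t) / hseq ℓ)
      Filter.atTop (nhds lamdot))
    (hlamdot' : Filter.Tendsto (fun ℓ => (lam j' (t + hseq ℓ) - lam j' t) / hseq ℓ)
      Filter.atTop (nhds lamdot))
    -- the correctors `z_*^j`, `z_*^{j'} ∈ PV`
    (zj zj' : V) (hzjP : P zj = zj) (hzj'P : P zj' = zj')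
    (hzj : ∀ v : V,
      A t zj v - lambda * B t (ι zj) (ι v) =
        -(A' φj v - lamdot * B t (ι φj) (ι v) - lambda * B' (ι φj) (ι v)))
    (hzj' : ∀ v : V,
      A t zj' v - lambda * B t (ι zj') (ι v) =
        -(A' φj' v - lamdot * B t (ι φj') (ι v) - lambda * B' (ι φj') (ι v))) :
    A'' φj φj' - lambda * B'' (ι φj) (ι φj') - 2 * lamdot * B' (ι φj) (ι φj') =
      2 * (A t zj zj' - lambda * B t (ι zj) (ι zj')) :=
  hadamard_stmt15_general ι A B hAsymm hBsymm CB hBbdd t A' B' CA' hA'bdd CB' hB'bdd A'' B'' CA''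
    hA''bdd CB'' hB''bdd hAder2 hBder2 lam u j j' heig lambda hlambda Y hYeig hseq hseq0 hseqlim φj
    φj' hφjY hφj'Y hφnorm hφorth hφlim lamdot hlamdot zj zj' hzj hzj'
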